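/- Fix n ≥ 1, signs t_1,…,t_n, s_1,…,s_n ∈ {−1, 1}, and let D = diag(t_1,…,t_n, s_1,…,s_n) ∈ M_{2n}(ℝ). Let σ be a 2n×2n real matrix satisfying σ Ω σᵀ = Ω and σᵀ D σ = D, where Ω is the standard symplectic matrix. For p ∈ ℝ^{2n+1} and u ∈ ℝ^{2n} set V(p, u) = Σ_{i=1}^{n} ( u_i X_i(p) + u_{n+i} Y_i(p) ) ∈ ℝ^{2n+1}. Then for every p ∈ ℝ^{2n+1} and all u, u' ∈ ℝ^{2n}: L_σ(V(p, u)) = V(f_σ(p), σu), and (σu)ᵀ D (σu') = uᵀ D u'. Consequently f_σ maps the subspace H_p spanned by X_1(p),…,Y_n(p) onto H_{f_σ(p)} and preserves the pseudo-Riemannian inner product on these subspaces in which the frame (X_1,…,X_n, Y_1,…,Y_n) is orthonormal with g(X_i, X_i) = t_i and g(Y_i, Y_i) = s_i; that is, f_σ is an isometry of the left-invariant contact sub-pseudo-Riemannian structure on the Heisenberg group. -/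

import Mathlib

open Matrix

/-- The Heisenberg group `ℝ^{2n+1}`, identified with `ℝⁿ × ℝⁿ × ℝ`; points `(x, y, z)`. -/
abbrev Heis (n : ℕ) : Type := (Fin n → ℝ) × (Fin n → ℝ) × ℝ

/-- The left-invariant vector field `X_i(x,y,z) = (e_i, 0, y_i/2)` on the Heisenberg group. -/
noncomputable def XH {n : ℕ} (i : Fin n) (p : Heis n) : Heis n :=
  (Pi.single i 1, 0, p.2.1 i / 2)

/-- The left-invariant vector field `Y_i(x,y,z) = (0, e_i, −x_i/2)` on the Heisenberg group. -/
noncomputable def YH {n : ℕ} (i : Fin n) (p : Heis n) : Heis n :=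
  (0, Pi.single i 1, -(p.1 i) / 2)

/-- The map `f_σ(x, y, z) = (σ(x,y), z)`. -/
noncomputable def fSigma {n : ℕ} (σ : Matrix (Fin n ⊕ Fin n) (Fin n ⊕ Fin n) ℝ)
    (p : Heis n) : Heis n :=
  (fun i => σ.mulVec (Sum.elim p.1 p.2.1) (Sum.inl i),
   fun i => σ.mulVec (Sum.elim p.1 p.2.1) (Sum.inr i),
   p.2.2)

/-- The differential of `f_σ` (at every point): the linear map
`(v_x, v_y, v_z) ↦ (σ(v_x, v_y), v_z)`. -/
noncomputable def LSigma {n : ℕ} (σ : Matrix (Fin n ⊕ Fin n) (Fin n ⊕ Fin n) ℝ) :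
    Heis n →ₗ[ℝ] Heis n where
  toFun v :=
    (fun i => σ.mulVec (Sum.elim v.1 v.2.1) (Sum.inl i),
     fun i => σ.mulVec (Sum.elim v.1 v.2.1) (Sum.inr i),
     v.2.2)
  map_add' v w := by
    have h : Sum.elim (v + w).1 (v + w).2.1
        = Sum.elim v.1 v.2.1 + Sum.elim w.1 w.2.1 := by
      funext s; cases s <;> rfl
    simp only [h, Matrix.mulVec_add]
    rfl
  map_smul' c v := by
    have h : Sum.elim (c • v).1 (c • v).2.1 = c • Sum.elim v.1 v.2.1 := by
      funext s; cases s <;> rfl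
    simp only [h, Matrix.mulVec_smul]
    rfl

/-- The horizontal vector `V(p, u) = Σᵢ (uᵢ Xᵢ(p) + u_{n+i} Yᵢ(p))`. -/
noncomputable def VH {n : ℕ} (p : Heis n) (u : Fin n ⊕ Fin n → ℝ) : Heis n :=
  (∑ i, u (Sum.inl i) • XH i p) + (∑ i, u (Sum.inr i) • YH i p)

/-! The horizontal part of `V(p, u)` is `u` and its vertical part is `-(u ⬝ᵥ Ω (x, y)) / 2`
(`Ω` is Mathlib's `Matrix.J`), half the symplectic pairing of `u` with the horizontal part
`(x, y)` of `p`. Since `f_σ` and its differential act by `σ` on horizontal parts and fix the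
vertical coordinate, `L_σ V(p, u) = V(f_σ p, σ u)` reduces to `σ` preserving the symplectic form,
`σᵀ Ω σ = Ω`, which is equivalent to `σ Ω σᵀ = Ω`. The pseudo-metric is preserved because
`σᵀ D σ = D`, and `f_σ` maps `H_p`, the image of `u ↦ V(p, u)`, onto `H_{f_σ p}` because a
symplectic `σ` is invertible. -/

theorem Matrix.mulVec_dotProduct_mulVec_mulVec {ι R : Type*} [Fintype ι] [CommSemiring R]
    (A B : Matrix ι ι R) (u w : ι → R) :
    A *ᵥ u ⬝ᵥ B *ᵥ (A *ᵥ w) = u ⬝ᵥ (Aᵀ * B * A) *ᵥ w := by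
  rw [mulVec_mulVec, dotProduct_mulVec, ← vecMul_transpose, vecMul_vecMul,
    ← dotProduct_mulVec, Matrix.mul_assoc]

namespace Heis

variable {n : ℕ}

def horizontal (v : Heis n) : Fin n ⊕ Fin n → ℝ :=
  Sum.elim v.1 v.2.1

theorem ext_horizontal {v w : Heis n} (h : horizontal v = horizontal w) (hz : v.2.2 = w.2.2) :
    v = w := by
  obtain ⟨x, y, z⟩ := v
  obtain ⟨x', y', z'⟩ := w
  obtain ⟨rfl, rfl⟩ := Sum.elim_eq_iff.mp h
  simp_all

end Heis

section

open Heis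

variable {n : ℕ}

theorem horizontal_fSigma (σ : Matrix (Fin n ⊕ Fin n) (Fin n ⊕ Fin n) ℝ) (p : Heis n) :
    horizontal (fSigma σ p) = σ *ᵥ horizontal p :=
  funext fun k => by cases k <;> rfl

theorem horizontal_LSigma (σ : Matrix (Fin n ⊕ Fin n) (Fin n ⊕ Fin n) ℝ) (v : Heis n) :
    horizontal (LSigma σ v) = σ *ᵥ horizontal v :=
  funext fun k => by cases k <;> rfl

theorem LSigma_vertical (σ : Matrix (Fin n ⊕ Fin n) (Fin n ⊕ Fin n) ℝ) (v : Heis n) :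
    (LSigma σ v).2.2 = v.2.2 :=
  rfl

theorem VH_eq_linearCombination (p : Heis n) (u : Fin n ⊕ Fin n → ℝ) :
    VH p u = Fintype.linearCombination ℝ (Sum.elim (XH · p) (YH · p)) u := by
  simp [VH, Fintype.linearCombination_apply, Fintype.sum_sum_type]

theorem horizontal_VH (p : Heis n) (u : Fin n ⊕ Fin n → ℝ) : horizontal (VH p u) = u := by
  ext (i | i) <;> simp [horizontal, VH, XH, YH, Prod.fst_sum, Prod.snd_sum, Finset.sum_apply,
    Pi.single_apply]

theorem VH_vertical (p : Heis n) (u : Fin n ⊕ Fin n → ℝ) :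
    (VH p u).2.2 = -(u ⬝ᵥ J (Fin n) ℝ *ᵥ horizontal p) / 2 := by
  simp only [VH, XH, YH, J, horizontal, Prod.snd_add, Prod.snd_sum, Prod.smul_snd, smul_eq_mul,
    fromBlocks_mulVec, zero_mulVec, one_mulVec, neg_mulVec, dotProduct, Fintype.sum_sum_type,
    Function.comp_apply, Sum.elim_inl, Sum.elim_inr, zero_add, add_zero, Pi.neg_apply]
  simp only [mul_div_assoc', neg_div, mul_neg, ← Finset.sum_div, Finset.sum_neg_distrib]
  ring

theorem LSigma_VH {σ : Matrix (Fin n ⊕ Fin n) (Fin n ⊕ Fin n) ℝ}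
    (hσ : σ ∈ symplecticGroup (Fin n) ℝ) (p : Heis n) (u : Fin n ⊕ Fin n → ℝ) :
    LSigma σ (VH p u) = VH (fSigma σ p) (σ *ᵥ u) := by
  refine ext_horizontal ?_ ?_
  · rw [horizontal_LSigma, horizontal_VH, horizontal_VH]
  · rw [LSigma_vertical, VH_vertical, VH_vertical, horizontal_fSigma,
      mulVec_dotProduct_mulVec_mulVec, SymplecticGroup.mem_iff'.mp hσ]

theorem map_LSigma_span_XH_YH {σ : Matrix (Fin n ⊕ Fin n) (Fin n ⊕ Fin n) ℝ}
    (hσ : σ ∈ symplecticGroup (Fin n) ℝ) (p : Heis n) :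
    Submodule.map (LSigma σ) (Submodule.span ℝ (Set.range (Sum.elim (XH · p) (YH · p)))) =
      Submodule.span ℝ (Set.range (Sum.elim (XH · (fSigma σ p)) (YH · (fSigma σ p)))) := by
  have hcomp : (LSigma σ).comp (Fintype.linearCombination ℝ (Sum.elim (XH · p) (YH · p))) =
      (Fintype.linearCombination ℝ (Sum.elim (XH · (fSigma σ p)) (YH · (fSigma σ p)))).comp
        σ.mulVecLin :=
    LinearMap.ext fun u => by
      simpa only [LinearMap.comp_apply, mulVecLin_apply, ← VH_eq_linearCombination]
        using LSigma_VH hσ p u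
  have hsurj : LinearMap.range σ.mulVecLin = ⊤ :=
    LinearMap.range_eq_top.mpr (mulVec_surjective_iff_isUnit.mpr
      (isUnit_iff_isUnit_det σ |>.mpr (SymplecticGroup.symplectic_det hσ)))
  rw [← Fintype.range_linearCombination, ← Fintype.range_linearCombination,
    ← LinearMap.range_comp, hcomp, LinearMap.range_comp, hsurj, Submodule.map_top]

end

theorem fSigma_isometry_heisenberg_general
    (n : ℕ)
    (D : Matrix (Fin n ⊕ Fin n) (Fin n ⊕ Fin n) ℝ)
    (σ : Matrix (Fin n ⊕ Fin n) (Fin n ⊕ Fin n) ℝ)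
    (hσΩ : σ * Matrix.fromBlocks 0 (-1) 1 0 * σᵀ = Matrix.fromBlocks 0 (-1) 1 0)
    (hσD : σᵀ * D * σ = D)
    (p : Heis n) (u u' : Fin n ⊕ Fin n → ℝ) :
    LSigma σ (VH p u) = VH (fSigma σ p) (σ.mulVec u) ∧
    (σ.mulVec u) ⬝ᵥ D.mulVec (σ.mulVec u') = u ⬝ᵥ D.mulVec u' ∧
    Submodule.map (LSigma σ)
        (Submodule.span ℝ
          (Set.range (Sum.elim (fun j : Fin n => XH j p) (fun j : Fin n => YH j p)))) =
      Submodule.span ℝ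
        (Set.range (Sum.elim (fun j : Fin n => XH j (fSigma σ p))
          (fun j : Fin n => YH j (fSigma σ p)))) := by
  have hσ : σ ∈ symplecticGroup (Fin n) ℝ := SymplecticGroup.mem_iff.mpr hσΩ
  refine ⟨LSigma_VH hσ p u, ?_, map_LSigma_span_XH_YH hσ p⟩
  rw [mulVec_dotProduct_mulVec_mulVec, hσD]

/-- If `σ` is symplectic (`σ Ω σᵀ = Ω`) and orthogonal for the
diagonal sign matrix `D` (`σᵀ D σ = D`), then the differential of `f_σ` maps
`V(p, u)` to `V(f_σ(p), σu)` and preserves the pseudo-Euclidean product given by `D`;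
consequently `f_σ` maps `H_p = span(X₁(p),…,Yₙ(p))` onto `H_{f_σ(p)}` isometrically:
`f_σ` is an isometry of the left-invariant contact sub-pseudo-Riemannian structure. -/
theorem fSigma_isometry_heisenberg
    (n : ℕ) (hn : 1 ≤ n) (t s : Fin n → ℝ)
    (ht : ∀ i, t i = 1 ∨ t i = -1) (hs : ∀ i, s i = 1 ∨ s i = -1)
    (D : Matrix (Fin n ⊕ Fin n) (Fin n ⊕ Fin n) ℝ)
    (hD : D = Matrix.diagonal (Sum.elim t s))
    (σ : Matrix (Fin n ⊕ Fin n) (Fin n ⊕ Fin n) ℝ)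
    (hσΩ : σ * Matrix.fromBlocks 0 (-1) 1 0 * σᵀ = Matrix.fromBlocks 0 (-1) 1 0)
    (hσD : σᵀ * D * σ = D)
    (p : Heis n) (u u' : Fin n ⊕ Fin n → ℝ) :
    LSigma σ (VH p u) = VH (fSigma σ p) (σ.mulVec u) ∧
    (σ.mulVec u) ⬝ᵥ D.mulVec (σ.mulVec u') = u ⬝ᵥ D.mulVec u' ∧
    Submodule.map (LSigma σ)
        (Submodule.span ℝ
          (Set.range (Sum.elim (fun j : Fin n => XH j p) (fun j : Fin n => YH j p)))) =
      Submodule.span ℝ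
        (Set.range (Sum.elim (fun j : Fin n => XH j (fSigma σ p))
          (fun j : Fin n => YH j (fSigma σ p)))) :=
  fSigma_isometry_heisenberg_general n D σ hσΩ hσD p u u'
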